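/- Let Δ be a simplicial complex on [n] and suppose F ∈ Δ is a free face whose unique containing facet is F ∪ {i} for some i ∉ F. Then the monomial m := (∏_{j∈F} x_j^2) · (∏_{j∈[n]∖(F∪{i})} x_j) satisfies m ∈ I_Δ^[2] : I_Δ but m ∉ I_Δ^[2] + (x_1 x_2 ⋯ x_n). In particular, if Δ has a free face then I_Δ^[2] : I_Δ ≠ I_Δ^[2] + (x_1 x_2 ⋯ x_n). -/

import Mathlib

/-!
All ideals involved are generated by monomials, and a monomial lies in such an ideal iff one of
the generators divides it (compare coefficients). For a non-face `G`, the set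
`H = (F ∪ G) \ {i}` is again a non-face: a facet containing `H` contains `F`, so it is
`F ∪ {i}`, which would make `G` a face. Since `m · x_G` is divisible by `x_H^2`, `m` lies in
`I_Δ^[2] : I_Δ`. On the other hand `x_i` does not divide `m`, and `x_H^2 ∣ m` forces `H ⊆ F`,
a face; so `m ∉ I_Δ^[2] + (x_1 ⋯ x_n)`.
-/

open MvPowerSeries Finset

/-- A simplicial complex on `[n]`: contains `∅` and is closed under taking subsets. -/
def IsSimplicialComplex {n : ℕ} (Δ : Set (Finset (Fin n))) : Prop :=
  ∅ ∈ Δ ∧ ∀ F ∈ Δ, ∀ G, G ⊆ F → G ∈ Δ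

/-- A facet: a face maximal with respect to inclusion. -/
def IsFacet {n : ℕ} (Δ : Set (Finset (Fin n))) (G : Finset (Fin n)) : Prop :=
  G ∈ Δ ∧ ∀ H ∈ Δ, G ⊆ H → H = G

/-- A free face: a face `F` such that `F ∪ {i}` is a facet for some `i ∉ F` and
`F ∪ {i}` is the unique facet containing `F`. -/
def IsFreeFace {n : ℕ} (Δ : Set (Finset (Fin n))) (F : Finset (Fin n)) : Prop :=
  F ∈ Δ ∧ ∃ i ∉ F, IsFacet Δ (insert i F) ∧
    ∀ G, IsFacet Δ G → F ⊆ G → G = insert i F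

/-- The Stanley–Reisner ideal `I_Δ` in `S = K[[x_1, …, x_n]]`. -/
noncomputable def SRIdeal (K : Type*) [Field K] {n : ℕ} (Δ : Set (Finset (Fin n))) :
    Ideal (MvPowerSeries (Fin n) K) :=
  Ideal.span ((fun F : Finset (Fin n) => ∏ i ∈ F, (X i : MvPowerSeries (Fin n) K)) ''
    {F | F ∉ Δ})

/-- The second Frobenius power `I_Δ^[2]` in `S = K[[x_1, …, x_n]]`. -/
noncomputable def SRIdeal2 (K : Type*) [Field K] {n : ℕ} (Δ : Set (Finset (Fin n))) :
    Ideal (MvPowerSeries (Fin n) K) :=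
  Ideal.span ((fun F : Finset (Fin n) => ∏ i ∈ F, (X i : MvPowerSeries (Fin n) K) ^ 2) ''
    {F | F ∉ Δ})

section MonomialIdeal

variable {σ R : Type*} [CommSemiring R]

lemma Finsupp.sum_single_apply_eq_ite [DecidableEq σ] (S : Finset σ) (k : ℕ) (a : σ) :
    (∑ j ∈ S, Finsupp.single j k) a = if a ∈ S then k else 0 := by
  simp only [Finsupp.finsetSum_apply, Finsupp.single_apply, Finset.sum_ite_eq']

lemma MvPowerSeries.prod_X_pow_eq_monomial (S : Finset σ) (k : ℕ) :
    ∏ j ∈ S, (X j : MvPowerSeries σ R) ^ k = monomial (∑ j ∈ S, Finsupp.single j k) 1 := by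
  simp_rw [X_pow_eq, prod_monomial, prod_const_one]

lemma MvPowerSeries.prod_X_eq_monomial (S : Finset σ) :
    ∏ j ∈ S, (X j : MvPowerSeries σ R) = monomial (∑ j ∈ S, Finsupp.single j 1) 1 := by
  simpa using prod_X_pow_eq_monomial (R := R) S 1

lemma MvPowerSeries.coeff_eq_zero_of_mem_span_monomial {E : Set (σ →₀ ℕ)} {d : σ →₀ ℕ}
    (hd : ∀ e ∈ E, ¬ e ≤ d) {f : MvPowerSeries σ R}
    (hf : f ∈ Ideal.span ((fun e => monomial e (1 : R)) '' E)) : coeff d f = 0 := by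
  classical
  suffices ∀ d' ≤ d, coeff d' f = 0 from this d le_rfl
  induction hf using Submodule.span_induction with
  | mem _ hg =>
    obtain ⟨e, he, rfl⟩ := hg
    intro d' hd'
    rw [coeff_monomial, if_neg]
    rintro rfl
    exact hd _ he hd'
  | zero => simp
  | add _ _ _ _ hf hg => intro d' hd'; simp [hf d' hd', hg d' hd']
  | smul s g _ hg =>
    intro d' hd'
    rw [smul_eq_mul, coeff_mul]
    refine Finset.sum_eq_zero fun p hp => ?_
    rw [Finset.HasAntidiagonal.mem_antidiagonal] at hp
    rw [hg p.2 ((hp ▸ le_add_self).trans hd'), mul_zero]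

theorem MvPowerSeries.monomial_mem_span_monomial_iff [Nontrivial R] {E : Set (σ →₀ ℕ)}
    {d : σ →₀ ℕ} :
    monomial d (1 : R) ∈ Ideal.span ((fun e => monomial e (1 : R)) '' E) ↔ ∃ e ∈ E, e ≤ d := by
  constructor
  · intro h
    by_contra! hd
    simpa using coeff_eq_zero_of_mem_span_monomial hd h (d := d)
  · rintro ⟨e, he, hed⟩
    have hsplit : monomial d (1 : R) = monomial (d - e) 1 * monomial e 1 := by
      rw [monomial_mul_monomial, one_mul, tsub_add_cancel_of_le hed]
    rw [hsplit]
    exact Ideal.mul_mem_left _ _ (Ideal.subset_span ⟨e, he, rfl⟩)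

end MonomialIdeal

section FreeFace

variable {n : ℕ} {Δ : Set (Finset (Fin n))} {F : Finset (Fin n)} {i : Fin n}

lemma exists_isFacet_superset {H : Finset (Fin n)} (hH : H ∈ Δ) : ∃ G, IsFacet Δ G ∧ H ⊆ G := by
  obtain ⟨G, hHG, hG⟩ := Δ.toFinite.exists_le_maximal hH
  exact ⟨G, ⟨hG.prop, fun H hH hGH => le_antisymm (hG.le_of_ge hH hGH) hGH⟩, hHG⟩

lemma union_erase_notMem_of_unique_facet (hdown : ∀ A ∈ Δ, ∀ B, B ⊆ A → B ∈ Δ) (hi : i ∉ F)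
    (hfacet : insert i F ∈ Δ) (huniq : ∀ G, IsFacet Δ G → F ⊆ G → G = insert i F)
    {G : Finset (Fin n)} (hG : G ∉ Δ) : (F ∪ G).erase i ∉ Δ := by
  intro hmem
  obtain ⟨G', hG', hsub⟩ := exists_isFacet_superset hmem
  have hFG' : F ⊆ G' := fun a ha =>
    hsub (mem_erase.2 ⟨ne_of_mem_of_not_mem ha hi, mem_union_left _ ha⟩)
  have hGF : G ⊆ insert i F := by
    intro a ha
    rcases eq_or_ne a i with rfl | hai
    · exact mem_insert_self _ _
    · rw [← huniq G' hG' hFG']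
      exact hsub (mem_erase.2 ⟨hai, mem_union_right _ ha⟩)
  exact hG (hdown _ hfacet G hGF)

/-- The exponent of the monomial `m`. -/
noncomputable def freeFaceExponent (F : Finset (Fin n)) (i : Fin n) : Fin n →₀ ℕ :=
  ∑ j ∈ F, Finsupp.single j 2 + ∑ j ∈ univ \ insert i F, Finsupp.single j 1

lemma freeFaceExponent_apply (hi : i ∉ F) (a : Fin n) :
    freeFaceExponent F i a = if a ∈ F then 2 else if a = i then 0 else 1 := by
  simp only [freeFaceExponent, Finsupp.add_apply, Finsupp.sum_single_apply_eq_ite, mem_sdiff,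
    mem_univ, mem_insert, true_and]
  by_cases ha : a ∈ F <;> by_cases hai : a = i <;> simp_all

lemma prod_X_sq_mul_prod_X_eq_monomial (R : Type*) [CommSemiring R] (F : Finset (Fin n))
    (i : Fin n) :
    (∏ j ∈ F, (X j : MvPowerSeries (Fin n) R) ^ 2) * ∏ j ∈ univ \ insert i F, X j =
      monomial (freeFaceExponent F i) 1 := by
  rw [prod_X_pow_eq_monomial, prod_X_eq_monomial, monomial_mul_monomial, one_mul,
    freeFaceExponent]

variable (K : Type*) [Field K]

lemma SRIdeal2_eq_span_monomial (Δ : Set (Finset (Fin n))) :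
    SRIdeal2 K Δ = Ideal.span ((fun e => monomial e (1 : K)) ''
      ((fun H => ∑ j ∈ H, Finsupp.single j 2) '' {H | H ∉ Δ})) := by
  simp_rw [SRIdeal2, Set.image_image, prod_X_pow_eq_monomial]

theorem monomial_freeFaceExponent_mem_colon (hdown : ∀ A ∈ Δ, ∀ B, B ⊆ A → B ∈ Δ)
    (hi : i ∉ F) (hfacet : insert i F ∈ Δ)
    (huniq : ∀ G, IsFacet Δ G → F ⊆ G → G = insert i F) :
    monomial (freeFaceExponent F i) 1 ∈ Submodule.colon (SRIdeal2 K Δ) (SRIdeal K Δ) := by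
  rw [SRIdeal, Ideal.colon_span, Submodule.mem_colon]
  rintro _ ⟨G, hG, rfl⟩
  beta_reduce
  rw [smul_eq_mul, prod_X_eq_monomial, monomial_mul_monomial, one_mul,
    SRIdeal2_eq_span_monomial, monomial_mem_span_monomial_iff]
  -- coordinates in `F` carry `2` in `m`, those of `G \ F` other than `i` carry `1` in both factors
  refine ⟨_, ⟨(F ∪ G).erase i, union_erase_notMem_of_unique_facet hdown hi hfacet huniq hG, rfl⟩,
    Finsupp.le_def.2 fun a => ?_⟩
  simp only [Finsupp.add_apply, Finsupp.sum_single_apply_eq_ite, freeFaceExponent_apply hi,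
    mem_erase, mem_union]
  split_ifs <;> simp_all

theorem monomial_freeFaceExponent_notMem_sup (hdown : ∀ A ∈ Δ, ∀ B, B ⊆ A → B ∈ Δ)
    (hi : i ∉ F) (hfacet : insert i F ∈ Δ) :
    monomial (freeFaceExponent F i) 1 ∉
      SRIdeal2 K Δ ⊔ Ideal.span {∏ j : Fin n, (X j : MvPowerSeries (Fin n) K)} := by
  rw [SRIdeal2_eq_span_monomial, prod_X_eq_monomial,
    ← Set.image_singleton (f := fun e => monomial e (1 : K)), ← Ideal.span_union,
    ← Set.image_union, monomial_mem_span_monomial_iff]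
  rintro ⟨e, ⟨H, hH, rfl⟩ | rfl, he⟩
  · refine hH (hdown _ hfacet H fun a ha => ?_)
    have := Finsupp.le_def.1 he a
    rw [Finsupp.sum_single_apply_eq_ite, if_pos ha, freeFaceExponent_apply hi] at this
    refine mem_insert_of_mem (by_contra fun haF => ?_)
    rw [if_neg haF] at this
    split_ifs at this <;> omega
  · have := Finsupp.le_def.1 he i
    simp [Finsupp.sum_single_apply_eq_ite, freeFaceExponent_apply hi, hi] at this

end FreeFace

theorem stmt_1_general (K : Type*) [Field K] {n : ℕ} (Δ : Set (Finset (Fin n)))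
    (hΔ : IsSimplicialComplex Δ) (F : Finset (Fin n))
    (i : Fin n) (hi : i ∉ F) (hfacet : IsFacet Δ (insert i F))
    (huniq : ∀ G, IsFacet Δ G → F ⊆ G → G = insert i F) :
    ((∏ j ∈ F, (X j : MvPowerSeries (Fin n) K) ^ 2) *
        ∏ j ∈ Finset.univ \ insert i F, (X j : MvPowerSeries (Fin n) K)) ∈
      Submodule.colon (SRIdeal2 K Δ) (SRIdeal K Δ) ∧
    ((∏ j ∈ F, (X j : MvPowerSeries (Fin n) K) ^ 2) *
        ∏ j ∈ Finset.univ \ insert i F, (X j : MvPowerSeries (Fin n) K)) ∉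
      SRIdeal2 K Δ ⊔ Ideal.span {∏ j : Fin n, (X j : MvPowerSeries (Fin n) K)} ∧
    Submodule.colon (SRIdeal2 K Δ) (SRIdeal K Δ) ≠
      SRIdeal2 K Δ ⊔ Ideal.span {∏ j : Fin n, (X j : MvPowerSeries (Fin n) K)} := by
  rw [prod_X_sq_mul_prod_X_eq_monomial]
  have hmem := monomial_freeFaceExponent_mem_colon K hΔ.2 hi hfacet.1 huniq
  have hnotMem := monomial_freeFaceExponent_notMem_sup K hΔ.2 hi hfacet.1
  exact ⟨hmem, hnotMem, fun h => hnotMem (h ▸ hmem)⟩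

/-- If `F` is a free face with unique containing facet `F ∪ {i}`, then
`m = (∏_{j∈F} x_j^2)·(∏_{j∉F∪{i}} x_j)` lies in `I_Δ^[2] : I_Δ` but not in
`I_Δ^[2] + (x_1 ⋯ x_n)`; in particular the two ideals differ. -/
theorem stmt_1 (K : Type*) [Field K] {n : ℕ} (Δ : Set (Finset (Fin n)))
    (hΔ : IsSimplicialComplex Δ) (F : Finset (Fin n)) (hF : F ∈ Δ)
    (i : Fin n) (hi : i ∉ F) (hfacet : IsFacet Δ (insert i F))
    (huniq : ∀ G, IsFacet Δ G → F ⊆ G → G = insert i F) :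
    ((∏ j ∈ F, (X j : MvPowerSeries (Fin n) K) ^ 2) *
        ∏ j ∈ Finset.univ \ insert i F, (X j : MvPowerSeries (Fin n) K)) ∈
      Submodule.colon (SRIdeal2 K Δ) (SRIdeal K Δ) ∧
    ((∏ j ∈ F, (X j : MvPowerSeries (Fin n) K) ^ 2) *
        ∏ j ∈ Finset.univ \ insert i F, (X j : MvPowerSeries (Fin n) K)) ∉
      SRIdeal2 K Δ ⊔ Ideal.span {∏ j : Fin n, (X j : MvPowerSeries (Fin n) K)} ∧
    Submodule.colon (SRIdeal2 K Δ) (SRIdeal K Δ) ≠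
      SRIdeal2 K Δ ⊔ Ideal.span {∏ j : Fin n, (X j : MvPowerSeries (Fin n) K)} :=
  stmt_1_general K Δ hΔ F i hi hfacet huniq
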